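/- arXiv:2212.06532 — 3 statements merged into one kernel-verified Lean document; each statement's English description precedes it below -/
import Mathlib

section
/- Let π : ℝⁿ → ℝᵐ be differentiable on an open convex set containing y and ŷ with y ≠ ŷ, let π*(ŷ) ∈ ℝᵐ be given (the ideal controller output), and set μ = π(y) − π*(ŷ) and ε = π(ŷ) − π*(ŷ). Suppose in addition that y − ŷ = Cζ + Dμ + D̃q for given matrices C, D, D̃ and vectors ζ, q. Then there exist points c₁, …, c_m in the open segment joining ŷ and y such that, with Λ the m×n matrix whose (i,j) entry is ∂πᵢ/∂yⱼ evaluated at cᵢ, one has μ = Λ(Cζ + Dμ + D̃q) + ε; consequently, if I − ΛD is invertible, μ = (I − ΛD)⁻¹ (ΛCζ + ΛD̃q + ε), and if D = 0 then μ = ΛCζ + ΛD̃q + ε. -/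
open Matrix

/-! The mean value theorem holds for each component `πᵢ` along the segment from `yh` to `y`, but
with its own intermediate point `cᵢ`; stacking these rows gives `Λ (y - yh) = π y - π yh`, and the
remaining claims are linear algebra on the output equation. -/

theorem exists_mem_openSegment_sub_eq_fderiv {E : Type*} [NormedAddCommGroup E]
    [NormedSpace ℝ E] {f : E → ℝ} {x y : E} (hcont : ContinuousOn f (segment ℝ x y))
    (hdiff : ∀ z ∈ openSegment ℝ x y, DifferentiableAt ℝ f z) :
    ∃ z ∈ openSegment ℝ x y, f y - f x = fderiv ℝ f z (y - x) := by
  set g : ℝ → E := fun t => AffineMap.lineMap x y t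
  have hg_maps : Set.MapsTo g (Set.Icc 0 1) (segment ℝ x y) := by
    rw [segment_eq_image_lineMap]; exact Set.mapsTo_image _ _
  have hg_open : Set.MapsTo g (Set.Ioo 0 1) (openSegment ℝ x y) := by
    rw [openSegment_eq_image_lineMap]; exact Set.mapsTo_image _ _
  obtain ⟨t, ht, hslope⟩ := exists_hasDerivAt_eq_slope (f ∘ g) (fun t => fderiv ℝ f (g t) (y - x))
    zero_lt_one (hcont.comp (AffineMap.lineMap_continuous).continuousOn hg_maps)
    fun t ht => (hdiff _ (hg_open ht)).hasFDerivAt.comp_hasDerivAt t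
      AffineMap.hasDerivAt_lineMap
  exact ⟨g t, hg_open ht, by simpa [g] using hslope.symm⟩

theorem Matrix.of_apply_single_mulVec {R ι κ : Type*} [CommSemiring R] [Fintype κ]
    [DecidableEq κ] (L : ι → (κ → R) →ₗ[R] R) (v : κ → R) :
    Matrix.of (fun i j => L i (Pi.single j 1)) *ᵥ v = fun i => L i v := by
  ext i
  conv_rhs => rw [pi_eq_sum_univ' v, map_sum]
  simp only [mulVec, dotProduct, of_apply, map_smul, smul_eq_mul, mul_comm]

theorem Matrix.eq_inv_mulVec_of_eq_mulVec_add {R m n : Type*} [CommRing R] [Fintype m]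
    [DecidableEq m] [Fintype n] {Λ : Matrix m n R} {D : Matrix n m R} {μ w : m → R}
    (h : μ = Λ *ᵥ (D *ᵥ μ) + w) (hu : IsUnit (1 - Λ * D)) : μ = (1 - Λ * D)⁻¹ *ᵥ w := by
  have := hu.invertible
  refine (inv_mulVec_eq_vec ?_).symm
  rw [sub_mulVec, one_mulVec, ← mulVec_mulVec]
  exact eq_sub_of_add_eq' h.symm

theorem controller_error_lemma_general {n m k p : ℕ}
    (πc : (Fin n → ℝ) → (Fin m → ℝ)) (U : Set (Fin n → ℝ))
    (hU : IsOpen U) (hUconv : Convex ℝ U) (hπ : DifferentiableOn ℝ πc U)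
    (y yh : Fin n → ℝ) (hy : y ∈ U) (hyh : yh ∈ U)
    (πstar : Fin m → ℝ)
    (C : Matrix (Fin n) (Fin k) ℝ) (D : Matrix (Fin n) (Fin m) ℝ)
    (Dt : Matrix (Fin n) (Fin p) ℝ)
    (ζ : Fin k → ℝ) (q : Fin p → ℝ) (μ ε : Fin m → ℝ)
    (hμ : μ = πc y - πstar) (hε : ε = πc yh - πstar)
    (hout : y - yh = C *ᵥ ζ + D *ᵥ μ + Dt *ᵥ q) :
    ∃ c : Fin m → (Fin n → ℝ),
      (∀ i, c i ∈ openSegment ℝ yh y) ∧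
      ∀ Λ : Matrix (Fin m) (Fin n) ℝ,
        Λ = Matrix.of (fun i j => fderiv ℝ (fun x => πc x i) (c i) (Pi.single j 1)) →
          μ = Λ *ᵥ (C *ᵥ ζ + D *ᵥ μ + Dt *ᵥ q) + ε ∧
          (IsUnit (1 - Λ * D) →
            μ = (1 - Λ * D)⁻¹ *ᵥ ((Λ * C) *ᵥ ζ + (Λ * Dt) *ᵥ q + ε)) ∧
          (D = 0 → μ = (Λ * C) *ᵥ ζ + (Λ * Dt) *ᵥ q + ε) := by
  have hseg : segment ℝ yh y ⊆ U := hUconv.segment_subset hyh hy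
  have hmvt (i : Fin m) : ∃ z ∈ openSegment ℝ yh y,
      πc y i - πc yh i = fderiv ℝ (fun x => πc x i) z (y - yh) :=
    exists_mem_openSegment_sub_eq_fderiv (continuousOn_pi.mp (hπ.continuousOn.mono hseg) i)
      fun z hz => differentiableAt_pi.mp
        (hπ.differentiableAt (hU.mem_nhds (hseg (openSegment_subset_segment _ _ _ hz)))) i
  choose c hc hmvt using hmvt
  refine ⟨c, hc, fun Λ hΛ => ?_⟩
  have hΛ_sub : Λ *ᵥ (y - yh) = πc y - πc yh :=
    hΛ ▸ (of_apply_single_mulVec (fun i => (fderiv ℝ (fun x => πc x i) (c i)).toLinearMap)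
      (y - yh)).trans (funext fun i => (hmvt i).symm)
  have hμ_eq : μ = Λ *ᵥ (C *ᵥ ζ + D *ᵥ μ + Dt *ᵥ q) + ε := by
    rw [← hout, hΛ_sub, hμ, hε]
    abel
  have hμ_split : μ = Λ *ᵥ (D *ᵥ μ) + ((Λ * C) *ᵥ ζ + (Λ * Dt) *ᵥ q + ε) := by
    conv_lhs => rw [hμ_eq]
    simp only [mulVec_add, ← mulVec_mulVec]
    abel
  refine ⟨hμ_eq, fun hu => eq_inv_mulVec_of_eq_mulVec_add hμ_split hu, fun hD => ?_⟩
  simpa [hD] using hμ_split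

/-- Controller error lemma: with `μ = π(y) − π*(yh)`, `ε = π(yh) − π*(yh)` and the output
equation `y − yh = Cζ + Dμ + D̃q`, the DMV theorem yields points `c i` in the open segment
joining `yh` and `y` such that, with `Λ i j = ∂πᵢ/∂yⱼ (c i)`,
`μ = Λ(Cζ + Dμ + D̃q) + ε`; hence `μ = (I − ΛD)⁻¹(ΛCζ + ΛD̃q + ε)` when `I − ΛD` is
invertible, and `μ = ΛCζ + ΛD̃q + ε` when `D = 0`. -/
theorem controller_error_lemma {n m k p : ℕ}
    (πc : (Fin n → ℝ) → (Fin m → ℝ)) (U : Set (Fin n → ℝ))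
    (hU : IsOpen U) (hUconv : Convex ℝ U) (hπ : DifferentiableOn ℝ πc U)
    (y yh : Fin n → ℝ) (hy : y ∈ U) (hyh : yh ∈ U) (hne : y ≠ yh)
    (πstar : Fin m → ℝ)
    (C : Matrix (Fin n) (Fin k) ℝ) (D : Matrix (Fin n) (Fin m) ℝ)
    (Dt : Matrix (Fin n) (Fin p) ℝ)
    (ζ : Fin k → ℝ) (q : Fin p → ℝ) (μ ε : Fin m → ℝ)
    (hμ : μ = πc y - πstar) (hε : ε = πc yh - πstar)
    (hout : y - yh = C *ᵥ ζ + D *ᵥ μ + Dt *ᵥ q) :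
    ∃ c : Fin m → (Fin n → ℝ),
      (∀ i, c i ∈ openSegment ℝ yh y) ∧
      ∀ Λ : Matrix (Fin m) (Fin n) ℝ,
        Λ = Matrix.of (fun i j => fderiv ℝ (fun x => πc x i) (c i) (Pi.single j 1)) →
          μ = Λ *ᵥ (C *ᵥ ζ + D *ᵥ μ + Dt *ᵥ q) + ε ∧
          (IsUnit (1 - Λ * D) →
            μ = (1 - Λ * D)⁻¹ *ᵥ ((Λ * C) *ᵥ ζ + (Λ * Dt) *ᵥ q + ε)) ∧
          (D = 0 → μ = (Λ * C) *ᵥ ζ + (Λ * Dt) *ᵥ q + ε) :=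
  controller_error_lemma_general πc U hU hUconv hπ y yh hy hyh πstar C D Dt ζ q μ ε hμ hε hout
end

section
/- Let K ⊆ ℝᵏ be a nonempty compact set, let M : ℝᵏ → (n×n real matrices) be continuous with M(s) symmetric and negative definite for every s ∈ K, and let F be a fixed symmetric positive semidefinite n×n real matrix. Then there exists ε > 0 such that for every s ∈ K the matrix M(s) + ε·F is negative semidefinite. -/
/-!
By compactness of `K × sphere 0 1`, the quadratic forms of `-M s` are bounded below by `c ‖x‖²`
with `c > 0` uniformly in `s ∈ K`, while that of `F` is bounded above by `C ‖x‖²`; any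
`ε > 0` with `ε C ≤ c` then works.
-/

open Matrix Metric

section QuadraticForm

variable {ι : Type*} [Fintype ι]

lemma Matrix.smul_dotProduct_mulVec_smul (A : Matrix ι ι ℝ) (t : ℝ) (x : ι → ℝ) :
    (t • x) ⬝ᵥ A *ᵥ (t • x) = t ^ 2 * (x ⬝ᵥ A *ᵥ x) := by
  rw [mulVec_smul, smul_dotProduct, dotProduct_smul, smul_eq_mul, smul_eq_mul]
  ring

/-- A quadratic form is 2-homogeneous, so a lower bound on the unit sphere propagates. -/
lemma Matrix.mul_norm_sq_le_dotProduct_mulVec_of_sphere {A : Matrix ι ι ℝ} {c : ℝ}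
    (h : ∀ y ∈ sphere (0 : ι → ℝ) 1, c ≤ y ⬝ᵥ A *ᵥ y) (x : ι → ℝ) :
    c * ‖x‖ ^ 2 ≤ x ⬝ᵥ A *ᵥ x := by
  rcases eq_or_ne x 0 with rfl | hx
  · simp
  have hxn : ‖x‖ ≠ 0 := norm_ne_zero_iff.2 hx
  have hunit : ‖x‖⁻¹ • x ∈ sphere (0 : ι → ℝ) 1 := by simp [norm_smul, hxn]
  have hx_eq : x = ‖x‖ • ‖x‖⁻¹ • x := by rw [smul_smul, mul_inv_cancel₀ hxn, one_smul]
  calc c * ‖x‖ ^ 2 ≤ ‖x‖ ^ 2 * ((‖x‖⁻¹ • x) ⬝ᵥ A *ᵥ (‖x‖⁻¹ • x)) := by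
        rw [mul_comm]; gcongr; exact h _ hunit
    _ = x ⬝ᵥ A *ᵥ x := by rw [← smul_dotProduct_mulVec_smul, ← hx_eq]

lemma Matrix.exists_dotProduct_mulVec_le_mul_norm_sq (A : Matrix ι ι ℝ) :
    ∃ C, ∀ x : ι → ℝ, x ⬝ᵥ A *ᵥ x ≤ C * ‖x‖ ^ 2 := by
  have hq : Continuous fun y : ι → ℝ => y ⬝ᵥ A *ᵥ y :=
    continuous_id.dotProduct (continuous_const.matrix_mulVec continuous_id)
  obtain ⟨C, hC⟩ := (isCompact_sphere (0 : ι → ℝ) 1).exists_bound_of_continuousOn hq.continuousOn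
  refine ⟨C, fun x => neg_le_neg_iff.1 ?_⟩
  have hneg : ∀ y ∈ sphere (0 : ι → ℝ) 1, -C ≤ y ⬝ᵥ (-A) *ᵥ y := fun y hy => by
    simpa [neg_mulVec] using neg_le_neg (le_of_abs_le (hC y hy))
  simpa [neg_mulVec, neg_mul] using mul_norm_sq_le_dotProduct_mulVec_of_sphere hneg x

/-- The minimum of `(s, y) ↦ yᵀ A(s) y` over the compact set `K × sphere 0 1` is positive. -/
lemma IsCompact.exists_pos_mul_norm_sq_le_dotProduct_mulVec {X : Type*} [TopologicalSpace X]
    {K : Set X} (hK : IsCompact K) {A : X → Matrix ι ι ℝ} (hA : Continuous A)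
    (hpos : ∀ s ∈ K, (A s).PosDef) :
    ∃ c > 0, ∀ s ∈ K, ∀ x : ι → ℝ, c * ‖x‖ ^ 2 ≤ x ⬝ᵥ A s *ᵥ x := by
  have hq : Continuous fun p : X × (ι → ℝ) => p.2 ⬝ᵥ A p.1 *ᵥ p.2 :=
    continuous_snd.dotProduct ((hA.comp continuous_fst).matrix_mulVec continuous_snd)
  obtain ⟨c, hc, hcK⟩ := (hK.prod (isCompact_sphere 0 1)).exists_forall_le' hq.continuousOn
    (a := 0) fun p hp => by
      simpa using (hpos p.1 hp.1).dotProduct_mulVec_pos (ne_zero_of_mem_unit_sphere ⟨p.2, hp.2⟩)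
  exact ⟨c, hc, fun s hs => mul_norm_sq_le_dotProduct_mulVec_of_sphere fun y hy =>
    hcK (s, y) ⟨hs, hy⟩⟩

end QuadraticForm

theorem lmi_perturbation_general {k n : ℕ} (K : Set (Fin k → ℝ))
    (hK : IsCompact K)
    (M : (Fin k → ℝ) → Matrix (Fin n) (Fin n) ℝ) (hMcont : Continuous M)
    (hMneg : ∀ s ∈ K, (-(M s)).PosDef)
    (F : Matrix (Fin n) (Fin n) ℝ) (hFsymm : F.IsSymm) :
    ∃ ε > (0 : ℝ), ∀ s ∈ K, (-(M s + ε • F)).PosSemidef := by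
  obtain ⟨c, hc, hMc⟩ :=
    hK.exists_pos_mul_norm_sq_le_dotProduct_mulVec hMcont.neg hMneg
  obtain ⟨C, hFC⟩ := F.exists_dotProduct_mulVec_le_mul_norm_sq
  obtain ⟨ε, hε, hεC⟩ : ∃ ε > 0, ε * C ≤ c := by
    refine ⟨c / (|C| + 1), by positivity, ?_⟩
    calc c / (|C| + 1) * C ≤ c / (|C| + 1) * (|C| + 1) := by
          gcongr; linarith [le_abs_self C]
      _ = c := div_mul_cancel₀ c (by positivity)
  refine ⟨ε, hε, fun s hs => .of_dotProduct_mulVec_nonneg ?_ fun x => ?_⟩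
  · have hMs : (M s).IsSymm := by simpa using (isHermitian_iff_isSymm.1 (hMneg s hs).1).neg
    exact isHermitian_iff_isSymm.2 (hMs.add (hFsymm.smul ε)).neg
  · calc 0 ≤ (c - ε * C) * ‖x‖ ^ 2 := by have := sub_nonneg.2 hεC; positivity
      _ = c * ‖x‖ ^ 2 - ε * (C * ‖x‖ ^ 2) := by ring
      _ ≤ x ⬝ᵥ -M s *ᵥ x - ε * (x ⬝ᵥ F *ᵥ x) := by gcongr; exacts [hMc s hs x, hFC x]
      _ = star x ⬝ᵥ -(M s + ε • F) *ᵥ x := by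
        simp only [star_trivial, neg_add, add_mulVec, neg_mulVec, smul_mulVec, dotProduct_add,
          dotProduct_neg, dotProduct_smul, smul_eq_mul]
        ring

/-- Perturbation of a strict parameter-dependent LMI on a compact set: if `M s` is symmetric
and negative definite for every `s` in a nonempty compact set `K`, `M` is continuous, and `F`
is symmetric positive semidefinite, then there is `ε > 0` such that `M s + ε • F` is
negative semidefinite for all `s ∈ K`. -/
theorem lmi_perturbation {k n : ℕ} (K : Set (Fin k → ℝ))
    (hK : IsCompact K) (hKne : K.Nonempty)
    (M : (Fin k → ℝ) → Matrix (Fin n) (Fin n) ℝ) (hMcont : Continuous M)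
    (hMsymm : ∀ s ∈ K, (M s).IsSymm) (hMneg : ∀ s ∈ K, (-(M s)).PosDef)
    (F : Matrix (Fin n) (Fin n) ℝ) (hFsymm : F.IsSymm) (hF : F.PosSemidef) :
    ∃ ε > (0 : ℝ), ∀ s ∈ K, (-(M s + ε • F)).PosSemidef :=
  lmi_perturbation_general K hK M hMcont hMneg F hFsymm
end

section
/- Let S ⊆ ℝᵏ and Ṡ ⊆ ℝᵏ, let 𝒜, ℬ₁, ℬ₂, 𝒞₁, 𝒟₁₁, 𝒟₁₂, 𝒞₂, 𝒟₂₁, 𝒟₂₂ be continuous matrix-valued functions of s ∈ ℝᵏ (of conformable dimensions), let P : ℝᵏ → (symmetric n×n real matrices) be differentiable with P(s) positive semidefinite for all s ∈ S, let M be a fixed symmetric matrix, and let λ ≥ 0 and γ > 0. Assume that for all (s, ρ) ∈ S × Ṡ the symmetric block matrix [[P(s)𝒜(s) + 𝒜(s)ᵀP(s) + ∂P(s,ρ), P(s)ℬ₁(s), P(s)ℬ₂(s)], [ℬ₁(s)ᵀP(s), 0, 0], [ℬ₂(s)ᵀP(s), 0, −I]] + (1/γ²)[𝒞₂(s) 𝒟₂₁(s)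 𝒟₂₂(s)]ᵀ[𝒞₂(s) 𝒟₂₁(s) 𝒟₂₂(s)] + λ[𝒞₁(s) 𝒟₁₁(s) 𝒟₁₂(s)]ᵀM[𝒞₁(s) 𝒟₁₁(s) 𝒟₁₂(s)] is negative semidefinite, where ∂P(s,ρ) = Σⱼ (∂P/∂sⱼ)(s)·ρⱼ. Let s : [0,∞) → ℝᵏ be differentiable with s(t) ∈ S and s′(t) ∈ Ṡ for all t, let q, η be continuous vector-valued functions on [0,∞), and let χ be continuously differentiable with χ(0) = 0 and χ′(t) = 𝒜(s(t))χ(t) + ℬ₁(s(t))q(t) + ℬ₂(s(t))η(t) for all t ≥ 0. Define r(t) = 𝒞₁(s(t))χ(t) + 𝒟₁₁(s(t))q(t) + 𝒟₁₂(s(t))η(t) and z(t) = 𝒞₂(s(t))χ(t) + 𝒟₂₁(s(t))q(t) + 𝒟₂₂(s(t))η(t), and assume the hard IQC condition ∫₀ᵀ r(τ)ᵀ M r(τ) dτ ≥ 0 for every T ≥ 0. Then for every T ≥ 0, ∫₀ᵀ ‖z(τ)‖² dτ ≤ γ² ∫₀ᵀ ‖η(τ)‖² dτ. -/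
/-! The storage function `V t = χ tᵀ P (s t) χ t` satisfies, by the LMI evaluated at the stacked
vector `(χ t, q t, η t)`, the pointwise dissipation inequality
`V' + γ⁻² ‖z‖² + λ rᵀ M r ≤ ‖η‖²`. Integrating over `[0, T]` with `V 0 = 0`, `V T ≥ 0` and the
hard IQC `∫ rᵀ M r ≥ 0` leaves `∫ ‖z‖² ≤ γ² ∫ ‖η‖²`. -/

open Matrix Set MeasureTheory

theorem ContinuousLinearMap.apply_eq_sum_single_mul {ι : Type*} [Fintype ι] [DecidableEq ι]
    (L : (ι → ℝ) →L[ℝ] ℝ) (v : ι → ℝ) : L v = ∑ l, L (Pi.single l 1) * v l := by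
  conv_lhs => rw [← Finset.univ_sum_single v]
  refine (map_sum L _ _).trans (Finset.sum_congr rfl fun l _ => ?_)
  have hl : Pi.single l (v l) = v l • Pi.single l (1 : ℝ) := by
    rw [← Pi.single_smul', smul_eq_mul, mul_one]
  rw [hl, map_smul, smul_eq_mul, mul_comm]

theorem HasDerivAt.dotProduct {ι : Type*} [Fintype ι] {x y : ℝ → ι → ℝ} {x' y' : ι → ℝ}
    {t : ℝ} (hx : HasDerivAt x x' t) (hy : HasDerivAt y y' t) :
    HasDerivAt (fun τ => x τ ⬝ᵥ y τ) (x' ⬝ᵥ y t + x t ⬝ᵥ y') t := by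
  have h := HasDerivAt.fun_sum fun i (_ : i ∈ Finset.univ) =>
    (hasDerivAt_pi.1 hx i).fun_mul (hasDerivAt_pi.1 hy i)
  simpa only [_root_.dotProduct, ← Finset.sum_add_distrib] using h

theorem HasDerivAt.matrix_mulVec {m n : Type*} [Fintype n] {Q : ℝ → Matrix m n ℝ}
    {Q' : Matrix m n ℝ} {x : ℝ → n → ℝ} {x' : n → ℝ} {t : ℝ}
    (hQ : ∀ i j, HasDerivAt (fun τ => Q τ i j) (Q' i j) t) (hx : HasDerivAt x x' t) :
    HasDerivAt (fun τ => Q τ *ᵥ x τ) (Q' *ᵥ x t + Q t *ᵥ x') t :=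
  hasDerivAt_pi.2 fun i => (hasDerivAt_pi.2 (hQ i)).dotProduct hx

theorem ContinuousOn.matrix_mulVec {X m n : Type*} [TopologicalSpace X] [Fintype n]
    {C : X → Matrix m n ℝ} {x : X → n → ℝ} {K : Set X} (hC : ContinuousOn C K)
    (hx : ContinuousOn x K) : ContinuousOn (fun t => C t *ᵥ x t) K :=
  (continuous_fst.matrix_mulVec continuous_snd).comp_continuousOn (hC.prodMk hx)

theorem ContinuousOn.matrix_mulVec_add_mulVec_add_mulVec {X Y m n p ν : Type*}
    [TopologicalSpace X] [TopologicalSpace Y] [Fintype n] [Fintype p] [Fintype ν]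
    {C : Y → Matrix m n ℝ} {D : Y → Matrix m p ℝ} {E : Y → Matrix m ν ℝ} {s : X → Y}
    {x : X → n → ℝ} {u : X → p → ℝ} {v : X → ν → ℝ} {K : Set X}
    (hC : Continuous C) (hD : Continuous D) (hE : Continuous E) (hs : ContinuousOn s K)
    (hx : ContinuousOn x K) (hu : ContinuousOn u K) (hv : ContinuousOn v K) :
    ContinuousOn (fun t => C (s t) *ᵥ x t + D (s t) *ᵥ u t + E (s t) *ᵥ v t) K :=
  (((hC.comp_continuousOn hs).matrix_mulVec hx).add
    ((hD.comp_continuousOn hs).matrix_mulVec hu)).add ((hE.comp_continuousOn hs).matrix_mulVec hv)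

theorem HasDerivAt.dotProduct_mulVec_comp {ι m : Type*} [Fintype ι] [DecidableEq ι]
    [Fintype m] {P : (ι → ℝ) → Matrix m m ℝ} {dP : Matrix m m ℝ} {s : ℝ → ι → ℝ} {s' : ι → ℝ}
    {x : ℝ → m → ℝ} {x' : m → ℝ} {t : ℝ}
    (hP : ∀ i j, DifferentiableAt ℝ (fun u => P u i j) (s t))
    (hdP : ∀ i j, dP i j = ∑ l, fderiv ℝ (fun u => P u i j) (s t) (Pi.single l 1) * s' l)
    (hs : HasDerivAt s s' t) (hx : HasDerivAt x x' t) :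
    HasDerivAt (fun τ => x τ ⬝ᵥ (P (s τ) *ᵥ x τ))
      (x' ⬝ᵥ (P (s t) *ᵥ x t) + x t ⬝ᵥ (dP *ᵥ x t + P (s t) *ᵥ x')) t := by
  refine hx.dotProduct (HasDerivAt.matrix_mulVec (fun i j => ?_) hx)
  rw [hdP, ← ContinuousLinearMap.apply_eq_sum_single_mul]
  exact (hP i j).hasFDerivAt.comp_hasDerivAt t hs

theorem add_integral_le_of_hasDerivAt_add_nonpos {V V' Φ : ℝ → ℝ} {a b : ℝ} (hab : a ≤ b)
    (hV : ∀ t ∈ Icc a b, HasDerivAt V (V' t) t) (hΦ : IntervalIntegrable Φ volume a b)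
    (hle : ∀ t ∈ Ioo a b, V' t + Φ t ≤ 0) : V b + ∫ t in a..b, Φ t ≤ V a := by
  have h := intervalIntegral.integral_le_sub_of_hasDeriv_right_of_le hab
    (fun t ht => (hV t ht).continuousAt.continuousWithinAt.neg)
    (fun t ht => (hV t (Ioo_subset_Icc_self ht)).hasDerivWithinAt.neg)
    ((intervalIntegrable_iff_integrableOn_Icc_of_le hab).1 hΦ)
    (fun t ht => by linarith [hle t ht])
  simp only [Pi.neg_apply] at h
  linarith

theorem dissipation_le_of_posSemidef {m p ν ρ ζ : Type*} [Fintype m] [Fintype p] [Fintype ν]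
    [Fintype ρ] [Fintype ζ] [DecidableEq ν]
    {A : Matrix m m ℝ} {B₁ : Matrix m p ℝ} {B₂ : Matrix m ν ℝ}
    {C₁ : Matrix ρ m ℝ} {D₁₁ : Matrix ρ p ℝ} {D₁₂ : Matrix ρ ν ℝ}
    {C₂ : Matrix ζ m ℝ} {D₂₁ : Matrix ζ p ℝ} {D₂₂ : Matrix ζ ν ℝ}
    {P dP : Matrix m m ℝ} {M : Matrix ρ ρ ℝ} {c lam : ℝ}
    (hLMI : (-(fromBlocks (P * A + Aᵀ * P + dP) (fromCols (P * B₁) (P * B₂))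
          (fromRows (B₁ᵀ * P) (B₂ᵀ * P)) (fromBlocks 0 0 0 (-(1 : Matrix ν ν ℝ)))
        + c • ((fromCols C₂ (fromCols D₂₁ D₂₂))ᵀ * fromCols C₂ (fromCols D₂₁ D₂₂))
        + lam • ((fromCols C₁ (fromCols D₁₁ D₁₂))ᵀ * M *
          fromCols C₁ (fromCols D₁₁ D₁₂)))).PosSemidef)
    (x : m → ℝ) (u : p → ℝ) (v : ν → ℝ) :
    (A *ᵥ x + B₁ *ᵥ u + B₂ *ᵥ v) ⬝ᵥ (P *ᵥ x)
      + x ⬝ᵥ (dP *ᵥ x + P *ᵥ (A *ᵥ x + B₁ *ᵥ u + B₂ *ᵥ v))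
      + c * ((C₂ *ᵥ x + D₂₁ *ᵥ u + D₂₂ *ᵥ v) ⬝ᵥ (C₂ *ᵥ x + D₂₁ *ᵥ u + D₂₂ *ᵥ v))
      + lam * ((C₁ *ᵥ x + D₁₁ *ᵥ u + D₁₂ *ᵥ v) ⬝ᵥ (M *ᵥ (C₁ *ᵥ x + D₁₁ *ᵥ u + D₁₂ *ᵥ v)))
      ≤ v ⬝ᵥ v := by
  have h := hLMI.dotProduct_mulVec_nonneg (Sum.elim x (Sum.elim u v))
  simp only [star_trivial, neg_mulVec, dotProduct_neg, add_mulVec, smul_mulVec, dotProduct_add,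
    dotProduct_smul, smul_eq_mul, ← mulVec_mulVec, fromBlocks_mulVec, fromCols_mulVec_sumElim,
    fromRows_mulVec, sumElim_dotProduct_sumElim, zero_mulVec, one_mulVec, dotProduct_mulVec,
    vecMul_transpose, mulVec_add, dotProduct_zero, add_zero, zero_add, Sum.elim_comp_inl,
    Sum.elim_comp_inr] at h
  simp only [← dotProduct_mulVec, mulVec_add, dotProduct_add, add_dotProduct, mul_add] at h ⊢
  linarith

theorem worst_case_RISE_general {k n nq nη nr nz : ℕ}
    (S Sdot : Set (Fin k → ℝ))
    (A : (Fin k → ℝ) → Matrix (Fin n) (Fin n) ℝ)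
    (B₁ : (Fin k → ℝ) → Matrix (Fin n) (Fin nq) ℝ)
    (B₂ : (Fin k → ℝ) → Matrix (Fin n) (Fin nη) ℝ)
    (C₁ : (Fin k → ℝ) → Matrix (Fin nr) (Fin n) ℝ)
    (D₁₁ : (Fin k → ℝ) → Matrix (Fin nr) (Fin nq) ℝ)
    (D₁₂ : (Fin k → ℝ) → Matrix (Fin nr) (Fin nη) ℝ)
    (C₂ : (Fin k → ℝ) → Matrix (Fin nz) (Fin n) ℝ)
    (D₂₁ : (Fin k → ℝ) → Matrix (Fin nz) (Fin nq) ℝ)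
    (D₂₂ : (Fin k → ℝ) → Matrix (Fin nz) (Fin nη) ℝ)
    (hC₁c : Continuous C₁) (hD₁₁c : Continuous D₁₁) (hD₁₂c : Continuous D₁₂)
    (hC₂c : Continuous C₂) (hD₂₁c : Continuous D₂₁) (hD₂₂c : Continuous D₂₂)
    (P : (Fin k → ℝ) → Matrix (Fin n) (Fin n) ℝ)
    (hPdiff : ∀ i j, Differentiable ℝ (fun u => P u i j))
    (hPpos : ∀ s ∈ S, (P s).PosSemidef)
    (dP : (Fin k → ℝ) → (Fin k → ℝ) → Matrix (Fin n) (Fin n) ℝ)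
    (hdP : ∀ s ρ i j,
      dP s ρ i j = ∑ l, fderiv ℝ (fun u => P u i j) s (Pi.single l 1) * ρ l)
    (M : Matrix (Fin nr) (Fin nr) ℝ)
    (lam γ : ℝ) (hlam : 0 ≤ lam) (hγ : 0 < γ)
    (hLMI : ∀ s ∈ S, ∀ ρ ∈ Sdot,
      (-(Matrix.fromBlocks
          (P s * A s + (A s)ᵀ * P s + dP s ρ)
          (Matrix.fromCols (P s * B₁ s) (P s * B₂ s))
          (Matrix.fromRows ((B₁ s)ᵀ * P s) ((B₂ s)ᵀ * P s))
          (Matrix.fromBlocks 0 0 0 (-(1 : Matrix (Fin nη) (Fin nη) ℝ)))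
        + (1 / γ ^ 2) •
            ((Matrix.fromCols (C₂ s) (Matrix.fromCols (D₂₁ s) (D₂₂ s)))ᵀ *
              (Matrix.fromCols (C₂ s) (Matrix.fromCols (D₂₁ s) (D₂₂ s))))
        + lam •
            ((Matrix.fromCols (C₁ s) (Matrix.fromCols (D₁₁ s) (D₁₂ s)))ᵀ * M *
              (Matrix.fromCols (C₁ s) (Matrix.fromCols (D₁₁ s) (D₁₂ s)))))).PosSemidef)
    (s : ℝ → Fin k → ℝ) (s' : ℝ → Fin k → ℝ)
    (hs : ∀ t, 0 ≤ t → HasDerivAt s (s' t) t)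
    (hsS : ∀ t, 0 ≤ t → s t ∈ S) (hs'S : ∀ t, 0 ≤ t → s' t ∈ Sdot)
    (q : ℝ → Fin nq → ℝ) (η : ℝ → Fin nη → ℝ) (hq : Continuous q) (hη : Continuous η)
    (χ : ℝ → Fin n → ℝ) (hχ0 : χ 0 = 0)
    (hχ : ∀ t, 0 ≤ t →
      HasDerivAt χ (A (s t) *ᵥ χ t + B₁ (s t) *ᵥ q t + B₂ (s t) *ᵥ η t) t)
    (r : ℝ → Fin nr → ℝ)
    (hr : ∀ t, r t = C₁ (s t) *ᵥ χ t + D₁₁ (s t) *ᵥ q t + D₁₂ (s t) *ᵥ η t)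
    (z : ℝ → Fin nz → ℝ)
    (hz : ∀ t, z t = C₂ (s t) *ᵥ χ t + D₂₁ (s t) *ᵥ q t + D₂₂ (s t) *ᵥ η t)
    (hIQC : ∀ T, 0 ≤ T → 0 ≤ ∫ τ in (0:ℝ)..T, r τ ⬝ᵥ (M *ᵥ r τ)) :
    ∀ T, 0 ≤ T →
      (∫ τ in (0:ℝ)..T, z τ ⬝ᵥ z τ) ≤ γ ^ 2 * ∫ τ in (0:ℝ)..T, η τ ⬝ᵥ η τ := by
  intro T hT
  have hsc : ContinuousOn s (Icc 0 T) := fun t ht => (hs t ht.1).continuousAt.continuousWithinAt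
  have hχc : ContinuousOn χ (Icc 0 T) := fun t ht => (hχ t ht.1).continuousAt.continuousWithinAt
  have hzc : ContinuousOn z (Icc 0 T) := funext hz ▸
    hsc.matrix_mulVec_add_mulVec_add_mulVec hC₂c hD₂₁c hD₂₂c hχc hq.continuousOn hη.continuousOn
  have hrc : ContinuousOn r (Icc 0 T) := funext hr ▸
    hsc.matrix_mulVec_add_mulVec_add_mulVec hC₁c hD₁₁c hD₁₂c hχc hq.continuousOn hη.continuousOn
  have hinteg {f : ℝ → ℝ} (hf : ContinuousOn f (Icc 0 T)) : IntervalIntegrable f volume 0 T :=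
    hf.intervalIntegrable_of_Icc hT
  have hZ := hinteg (f := fun t => 1 / γ ^ 2 * (z t ⬝ᵥ z t)) (by fun_prop)
  have hR := hinteg (f := fun t => lam * (r t ⬝ᵥ (M *ᵥ r t))) (by fun_prop)
  have hE := hinteg (f := fun t => η t ⬝ᵥ η t) (by fun_prop)
  have hdiss := add_integral_le_of_hasDerivAt_add_nonpos hT
    (fun t ht => HasDerivAt.dotProduct_mulVec_comp (fun i j => hPdiff i j _) (hdP _ _)
      (hs t ht.1) (hχ t ht.1))
    ((hZ.add hR).sub hE) fun t ht => by
      have h := dissipation_le_of_posSemidef (hLMI _ (hsS t ht.1.le) _ (hs'S t ht.1.le))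
        (χ t) (q t) (η t)
      rw [hz, hr]
      linarith
  rw [intervalIntegral.integral_sub (hZ.add hR) hE, intervalIntegral.integral_add hZ hR,
    intervalIntegral.integral_const_mul, intervalIntegral.integral_const_mul] at hdiss
  have hVT := (hPpos _ (hsS T hT)).dotProduct_mulVec_nonneg (χ T)
  simp only [hχ0, zero_dotProduct, star_trivial] at hdiss hVT
  have hZE : 1 / γ ^ 2 * ∫ τ in (0:ℝ)..T, z τ ⬝ᵥ z τ ≤ ∫ τ in (0:ℝ)..T, η τ ⬝ᵥ η τ := by
    nlinarith [mul_nonneg hlam (hIQC T hT)]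
  rwa [one_div, inv_mul_le_iff₀ (by positivity)] at hZE

/-- Worst-case RISE theorem (integrated form): if the parameter-dependent dissipation LMI
holds on `S × Ṡ` with positive semidefinite storage matrix `P(s)`, and the IQC filter output
`r` satisfies the hard IQC `∫₀ᵀ rᵀMr ≥ 0`, then the extended LPV error system with zero
initial state satisfies `∫₀ᵀ ‖z‖² ≤ γ² ∫₀ᵀ ‖η‖²` for every `T ≥ 0`. -/
theorem worst_case_RISE {k n nq nη nr nz : ℕ}
    (S Sdot : Set (Fin k → ℝ))
    (A : (Fin k → ℝ) → Matrix (Fin n) (Fin n) ℝ)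
    (B₁ : (Fin k → ℝ) → Matrix (Fin n) (Fin nq) ℝ)
    (B₂ : (Fin k → ℝ) → Matrix (Fin n) (Fin nη) ℝ)
    (C₁ : (Fin k → ℝ) → Matrix (Fin nr) (Fin n) ℝ)
    (D₁₁ : (Fin k → ℝ) → Matrix (Fin nr) (Fin nq) ℝ)
    (D₁₂ : (Fin k → ℝ) → Matrix (Fin nr) (Fin nη) ℝ)
    (C₂ : (Fin k → ℝ) → Matrix (Fin nz) (Fin n) ℝ)
    (D₂₁ : (Fin k → ℝ) → Matrix (Fin nz) (Fin nq) ℝ)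
    (D₂₂ : (Fin k → ℝ) → Matrix (Fin nz) (Fin nη) ℝ)
    (hAc : Continuous A) (hB₁c : Continuous B₁) (hB₂c : Continuous B₂)
    (hC₁c : Continuous C₁) (hD₁₁c : Continuous D₁₁) (hD₁₂c : Continuous D₁₂)
    (hC₂c : Continuous C₂) (hD₂₁c : Continuous D₂₁) (hD₂₂c : Continuous D₂₂)
    (P : (Fin k → ℝ) → Matrix (Fin n) (Fin n) ℝ)
    (hPdiff : ∀ i j, Differentiable ℝ (fun u => P u i j))
    (hPsymm : ∀ u, (P u).IsSymm)
    (hPpos : ∀ s ∈ S, (P s).PosSemidef)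
    (dP : (Fin k → ℝ) → (Fin k → ℝ) → Matrix (Fin n) (Fin n) ℝ)
    (hdP : ∀ s ρ i j,
      dP s ρ i j = ∑ l, fderiv ℝ (fun u => P u i j) s (Pi.single l 1) * ρ l)
    (M : Matrix (Fin nr) (Fin nr) ℝ) (hM : M.IsSymm)
    (lam γ : ℝ) (hlam : 0 ≤ lam) (hγ : 0 < γ)
    (hLMI : ∀ s ∈ S, ∀ ρ ∈ Sdot,
      (-(Matrix.fromBlocks
          (P s * A s + (A s)ᵀ * P s + dP s ρ)
          (Matrix.fromCols (P s * B₁ s) (P s * B₂ s))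
          (Matrix.fromRows ((B₁ s)ᵀ * P s) ((B₂ s)ᵀ * P s))
          (Matrix.fromBlocks 0 0 0 (-(1 : Matrix (Fin nη) (Fin nη) ℝ)))
        + (1 / γ ^ 2) •
            ((Matrix.fromCols (C₂ s) (Matrix.fromCols (D₂₁ s) (D₂₂ s)))ᵀ *
              (Matrix.fromCols (C₂ s) (Matrix.fromCols (D₂₁ s) (D₂₂ s))))
        + lam •
            ((Matrix.fromCols (C₁ s) (Matrix.fromCols (D₁₁ s) (D₁₂ s)))ᵀ * M *
              (Matrix.fromCols (C₁ s) (Matrix.fromCols (D₁₁ s) (D₁₂ s)))))).PosSemidef)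
    (s : ℝ → Fin k → ℝ) (s' : ℝ → Fin k → ℝ)
    (hs : ∀ t, 0 ≤ t → HasDerivAt s (s' t) t)
    (hsS : ∀ t, 0 ≤ t → s t ∈ S) (hs'S : ∀ t, 0 ≤ t → s' t ∈ Sdot)
    (q : ℝ → Fin nq → ℝ) (η : ℝ → Fin nη → ℝ) (hq : Continuous q) (hη : Continuous η)
    (χ : ℝ → Fin n → ℝ) (hχ0 : χ 0 = 0)
    (hχ : ∀ t, 0 ≤ t →
      HasDerivAt χ (A (s t) *ᵥ χ t + B₁ (s t) *ᵥ q t + B₂ (s t) *ᵥ η t) t)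
    (hχc : Continuous χ)
    (r : ℝ → Fin nr → ℝ)
    (hr : ∀ t, r t = C₁ (s t) *ᵥ χ t + D₁₁ (s t) *ᵥ q t + D₁₂ (s t) *ᵥ η t)
    (z : ℝ → Fin nz → ℝ)
    (hz : ∀ t, z t = C₂ (s t) *ᵥ χ t + D₂₁ (s t) *ᵥ q t + D₂₂ (s t) *ᵥ η t)
    (hIQC : ∀ T, 0 ≤ T → 0 ≤ ∫ τ in (0:ℝ)..T, r τ ⬝ᵥ (M *ᵥ r τ)) :
    ∀ T, 0 ≤ T →
      (∫ τ in (0:ℝ)..T, z τ ⬝ᵥ z τ) ≤ γ ^ 2 * ∫ τ in (0:ℝ)..T, η τ ⬝ᵥ η τ :=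
  worst_case_RISE_general S Sdot A B₁ B₂ C₁ D₁₁ D₁₂ C₂ D₂₁ D₂₂ hC₁c hD₁₁c hD₁₂c hC₂c hD₂₁c hD₂₂c P
    hPdiff hPpos dP hdP M lam γ hlam hγ hLMI s s' hs hsS hs'S q η hq hη χ hχ0 hχ r hr z hz hIQC
end
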